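/- arXiv:2004.10961 — 3 statements merged into one kernel-verified Lean document; each statement's English description precedes it below -/
import Mathlib

section
/- Let $x_2 \in (-1,1)$ and define $q_1(x_1) = \frac{1}{\sqrt{2}}\sqrt{1 + \frac{x_1^2 - (1-x_2^2)}{\sqrt{x_1^2+(x_2+1)^2}\sqrt{x_1^2+(1-x_2)^2}}}$ for $x_1 \geq 0$. Then for $z \in (0, 1/\sqrt{2})$ the inverse function of $q_1$ is given explicitly by $g(z) = \frac{\sqrt{1-4x_2^2 z^2(1-z^2)} - (1-2z^2)}{2z\sqrt{1-z^2}}$, i.e., $q_1(g(z)) = z$. -/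
open Real Set

set_option maxHeartbeats 1600000 in
theorem bragg_curve_inverse (x2 : ℝ) (hx2 : x2 ∈ Set.Ioo (-1 : ℝ) 1)
    (q1 g : ℝ → ℝ)
    (hq1 : ∀ x1 : ℝ, q1 x1 = (1 / Real.sqrt 2) *
      Real.sqrt (1 + (x1 ^ 2 - (1 - x2 ^ 2)) /
        (Real.sqrt (x1 ^ 2 + (x2 + 1) ^ 2) * Real.sqrt (x1 ^ 2 + (1 - x2) ^ 2))))
    (hg : ∀ z : ℝ, g z =
      (Real.sqrt (1 - 4 * x2 ^ 2 * z ^ 2 * (1 - z ^ 2)) - (1 - 2 * z ^ 2)) /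
        (2 * z * Real.sqrt (1 - z ^ 2))) :
    ∀ z ∈ Set.Ioo (0 : ℝ) (1 / Real.sqrt 2), q1 (g z) = z := by
  obtain ⟨hx2l, hx2r⟩ := hx2
  have hx2sq : x2 ^ 2 < 1 := by nlinarith
  intro z hz
  obtain ⟨hz0, hz1⟩ := hz
  have hs2 : (0:ℝ) < Real.sqrt 2 := by positivity
  have h2 : Real.sqrt 2 ^ 2 = 2 := Real.sq_sqrt (by norm_num)
  have hz2 : z ^ 2 < 1 / 2 := by
    rw [lt_div_iff₀ hs2] at hz1
    nlinarith
  have h1z : (0:ℝ) < 1 - z ^ 2 := by linarith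
  set s := Real.sqrt (1 - z ^ 2) with hs_def
  have hs_pos : 0 < s := Real.sqrt_pos.mpr h1z
  have hs_sq : s ^ 2 = 1 - z ^ 2 := Real.sq_sqrt h1z.le
  set c := 1 - 2 * z ^ 2 with hc_def
  have hc_pos : 0 < c := by rw [hc_def]; linarith
  have hDarg : (0:ℝ) ≤ 1 - 4 * x2 ^ 2 * z ^ 2 * (1 - z ^ 2) := by
    nlinarith [sq_nonneg (x2 * (1 - 2 * z ^ 2))]
  set D := Real.sqrt (1 - 4 * x2 ^ 2 * z ^ 2 * (1 - z ^ 2)) with hD_def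
  have hD_nonneg : 0 ≤ D := Real.sqrt_nonneg _
  have hD2' : D ^ 2 = 1 - 4 * x2 ^ 2 * z ^ 2 * (1 - z ^ 2) := Real.sq_sqrt hDarg
  clear_value s c D
  set w := z * s with hw_def
  have hw_pos : 0 < w := mul_pos hz0 hs_pos
  have hw2 : w ^ 2 = z ^ 2 * (1 - z ^ 2) := by rw [hw_def, mul_pow, hs_sq]
  clear_value w
  have hc2 : c ^ 2 = 1 - 4 * w ^ 2 := by rw [hw2, hc_def]; ring
  have hD2 : D ^ 2 = 1 - 4 * x2 ^ 2 * w ^ 2 := by rw [hD2', hw2]; ring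
  have hcD : c ≤ D := by nlinarith [sq_nonneg w, mul_nonneg (sq_nonneg w) (le_of_lt (by nlinarith : (0:ℝ) < 1 - x2 ^ 2))]
  have hgz : g z = (D - c) / (2 * w) := by
    rw [hg z, hD_def, hc_def, hw_def, hs_def]; ring_nf
  set u := (g z) ^ 2 with hu_def
  have hu_nonneg : 0 ≤ u := hu_def ▸ sq_nonneg _
  clear_value u
  have hu : u * (4 * w ^ 2) = 2 - 4 * w ^ 2 * (1 + x2 ^ 2) - 2 * D * c := by
    rw [hu_def, hgz, div_pow]
    have h4 : (2 * w) ^ 2 = 4 * w ^ 2 := by ring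
    rw [h4, div_mul_cancel₀ _ (by positivity : (4 : ℝ) * w ^ 2 ≠ 0)]
    linear_combination hD2 + hc2
  -- numerator is nonpositive
  have hnum_nonpos : u - (1 - x2 ^ 2) ≤ 0 := by
    nlinarith [hu, hc2, mul_nonneg (sub_nonneg.mpr hcD) hc_pos.le, pow_pos hw_pos 2]
  -- the key squared identity
  have hkey : (u - (1 - x2 ^ 2)) ^ 2 =
      c ^ 2 * ((u + (x2 + 1) ^ 2) * (u + (1 - x2) ^ 2)) := by
    have h16 : (16 * w ^ 4) ≠ 0 := by positivity
    apply mul_right_cancel₀ h16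
    linear_combination (16 * w ^ 2 - 4 * (1 - D * c) ^ 2) * hc2 +
      16 * w ^ 2 * c ^ 2 * hD2 +
      4 * ((1 - D * c) - 4 * w ^ 2 - c ^ 2 * (1 - D * c)) * hu +
      (1 - c ^ 2) * (u * (4 * w ^ 2) - (2 - 4 * w ^ 2 * (1 + x2 ^ 2) - 2 * D * c)) * hu
  -- set up the square roots
  have huA : (0:ℝ) < u + (x2 + 1) ^ 2 := by
    have : (0:ℝ) < (x2 + 1) ^ 2 := pow_pos (by linarith) 2
    linarith
  have huB : (0:ℝ) < u + (1 - x2) ^ 2 := by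
    have : (0:ℝ) < (1 - x2) ^ 2 := pow_pos (by linarith) 2
    linarith
  set A := Real.sqrt (u + (x2 + 1) ^ 2) with hA_def
  set B := Real.sqrt (u + (1 - x2) ^ 2) with hB_def
  have hA_pos : 0 < A := Real.sqrt_pos.mpr huA
  have hB_pos : 0 < B := Real.sqrt_pos.mpr huB
  have hA2 : A ^ 2 = u + (x2 + 1) ^ 2 := Real.sq_sqrt huA.le
  have hB2 : B ^ 2 = u + (1 - x2) ^ 2 := Real.sq_sqrt huB.le
  clear_value A B
  have hAB_pos : 0 < A * B := mul_pos hA_pos hB_pos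
  -- num = -c * A * B
  have hnum : u - (1 - x2 ^ 2) = -(c * (A * B)) := by
    have hsq : (u - (1 - x2 ^ 2)) ^ 2 = (-(c * (A * B))) ^ 2 := by
      rw [hkey, ← hA2, ← hB2]; ring
    have hz' : (u - (1 - x2 ^ 2) - (-(c * (A * B)))) *
        (u - (1 - x2 ^ 2) + (-(c * (A * B)))) = 0 := by linear_combination hsq
    rcases mul_eq_zero.mp hz' with h | h
    · linarith
    · have h1 : -(c * (A * B)) ≤ 0 := neg_nonpos.mpr (mul_nonneg hc_pos.le hAB_pos.le)
      linarith
  -- now compute q1 (g z)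
  rw [hq1]
  rw [← hu_def, ← hA_def, ← hB_def]
  have harg : 1 + (u - (1 - x2 ^ 2)) / (A * B) = 2 * z ^ 2 := by
    rw [hnum]
    field_simp
    rw [hc_def]; ring
  rw [harg]
  have h2z : Real.sqrt (2 * z ^ 2) = Real.sqrt 2 * z := by
    rw [Real.sqrt_mul (by norm_num : (0:ℝ) ≤ 2), Real.sqrt_sq hz0.le]
  rw [h2z]
  field_simp
end

section
/- Let $x_2 \in (-1,1)$ and $g(z) = \frac{\sqrt{1-4x_2^2 z^2(1-z^2)} - (1-2z^2)}{2z\sqrt{1-z^2}}$ for $z \in (0,1)$. Then $g$ is differentiable on $(0,1)$ and $g'(z) = g(z)\, h(z)$, where $h(z) = \frac{(1-4x_2^2 z^2(1-z^2))^{-1/2}}{z(1-z^2)}$. -/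
open Real Set

/-!
Write `g = N / D` with `N = √Q - (1 - 2z²)`, `D = 2z√(1 - z²)` and `Q = 1 - 4x₂²z²(1 - z²)`.
After the quotient rule, `g' = g h` is a polynomial identity in `z`, `√Q` and `√(1 - z²)` modulo
`(√Q)² = Q` and `(√(1 - z²))² = 1 - z²`, and it holds because `4z²(1 - z²) + (1 - 2z²)² = 1`.
The same identity gives `Q ≥ 1 - x₂² > 0`.
-/

lemma four_mul_sq_mul_one_sub_sq_le_one (z : ℝ) : 4 * z ^ 2 * (1 - z ^ 2) ≤ 1 := by
  nlinarith [sq_nonneg (1 - 2 * z ^ 2)]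

lemma one_sub_four_mul_sq_mul_sq_mul_one_sub_sq_pos {c : ℝ} (hc : c ^ 2 < 1) (z : ℝ) :
    0 < 1 - 4 * c ^ 2 * z ^ 2 * (1 - z ^ 2) := by
  nlinarith [four_mul_sq_mul_one_sub_sq_le_one z, sq_nonneg c]

lemma hasDerivAt_sqrt_one_sub_four_mul_sq_mul_sq_mul_one_sub_sq_sub {c z : ℝ}
    (hQ : 1 - 4 * c ^ 2 * z ^ 2 * (1 - z ^ 2) ≠ 0) :
    HasDerivAt (fun y => √(1 - 4 * c ^ 2 * y ^ 2 * (1 - y ^ 2)) - (1 - 2 * y ^ 2))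
      (4 * z - 4 * c ^ 2 * z * (1 - 2 * z ^ 2) / √(1 - 4 * c ^ 2 * z ^ 2 * (1 - z ^ 2))) z := by
  have hQ' : HasDerivAt (fun y => 1 - 4 * c ^ 2 * y ^ 2 * (1 - y ^ 2))
      (-(8 * c ^ 2 * z * (1 - 2 * z ^ 2))) z :=
    ((((hasDerivAt_pow 2 z).const_mul (4 * c ^ 2)).fun_mul
      ((hasDerivAt_pow 2 z).const_sub 1)).const_sub 1).congr_deriv (by push_cast; ring)
  have hw : HasDerivAt (fun y : ℝ => 1 - 2 * y ^ 2) (-(4 * z)) z :=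
    (((hasDerivAt_pow 2 z).const_mul 2).const_sub 1).congr_deriv (by push_cast; ring)
  refine ((hQ'.sqrt hQ).sub hw).congr_deriv ?_
  field_simp
  ring

lemma hasDerivAt_two_mul_mul_sqrt_one_sub_sq {z : ℝ} (hz : z ^ 2 < 1) :
    HasDerivAt (fun y => 2 * y * √(1 - y ^ 2)) (2 * (1 - 2 * z ^ 2) / √(1 - z ^ 2)) z := by
  have hpos : 0 < 1 - z ^ 2 := by linarith
  have hs : HasDerivAt (fun y : ℝ => 1 - y ^ 2) (-(2 * z)) z :=
    ((hasDerivAt_pow 2 z).const_sub 1).congr_deriv (by push_cast; ring)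
  refine (((hasDerivAt_id' z).const_mul 2).fun_mul (hs.sqrt hpos.ne')).congr_deriv ?_
  have : 0 < √(1 - z ^ 2) := Real.sqrt_pos.mpr hpos
  field_simp
  linear_combination Real.sq_sqrt hpos.le

/-- The quotient rule for `N / D` at `z`, with `S = √Q` and `s = √(1 - z²)` abstracted. -/
lemma quotient_rule_eq_mul {c z S s : ℝ} (hz : z ≠ 0) (hS : S ≠ 0) (hs : s ≠ 0)
    (hS2 : S ^ 2 = 1 - 4 * c ^ 2 * z ^ 2 * (1 - z ^ 2)) (hs2 : s ^ 2 = 1 - z ^ 2) :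
    ((4 * z - 4 * c ^ 2 * z * (1 - 2 * z ^ 2) / S) * (2 * z * s)
        - (S - (1 - 2 * z ^ 2)) * (2 * (1 - 2 * z ^ 2) / s)) / (2 * z * s) ^ 2
      = (S - (1 - 2 * z ^ 2)) / (2 * z * s) * (1 / S / (z * (1 - z ^ 2))) := by
  have hu : 1 - z ^ 2 ≠ 0 := hs2 ▸ pow_ne_zero 2 hs
  field_simp
  linear_combination
    ((1 - z ^ 2) * 4 * z ^ 2 * (S - c ^ 2 * (1 - 2 * z ^ 2)) - (S - (1 - 2 * z ^ 2))) * hs2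
      - (1 - z ^ 2) * (1 - 2 * z ^ 2) * hS2

theorem deriv_g_eq_g_mul_h (x2 : ℝ) (hx2 : x2 ∈ Set.Ioo (-1 : ℝ) 1)
    (g h : ℝ → ℝ)
    (hg : ∀ z : ℝ, g z =
      (Real.sqrt (1 - 4 * x2 ^ 2 * z ^ 2 * (1 - z ^ 2)) - (1 - 2 * z ^ 2)) /
        (2 * z * Real.sqrt (1 - z ^ 2)))
    (hh : ∀ z : ℝ, h z =
      (1 / Real.sqrt (1 - 4 * x2 ^ 2 * z ^ 2 * (1 - z ^ 2))) / (z * (1 - z ^ 2))) :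
    ∀ z ∈ Set.Ioo (0 : ℝ) 1, HasDerivAt g (g z * h z) z := by
  rintro z ⟨hz0, hz1⟩
  have hc : x2 ^ 2 < 1 := (sq_lt_one_iff_abs_lt_one x2).mpr (abs_lt.mpr hx2)
  have hz : z ^ 2 < 1 := by nlinarith
  have hQ := one_sub_four_mul_sq_mul_sq_mul_one_sub_sq_pos hc z
  have hu : 0 < 1 - z ^ 2 := by linarith
  rw [funext hg, hh]
  refine ((hasDerivAt_sqrt_one_sub_four_mul_sq_mul_sq_mul_one_sub_sq_sub hQ.ne').div
    (hasDerivAt_two_mul_mul_sqrt_one_sub_sq hz) (by positivity)).congr_deriv ?_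
  exact quotient_rule_eq_mul hz0.ne' (Real.sqrt_pos.mpr hQ).ne' (Real.sqrt_pos.mpr hu).ne'
    (Real.sq_sqrt hQ.le) (Real.sq_sqrt hu.le)
end

section
/- Let $x_2 \in (-1,1)$, $\epsilon \geq 0$, and define for $x_1 \geq 0$ the offset curve $q_1(x_1) = \frac{1}{\sqrt{2}}\sqrt{1 + \frac{x_1^2-(1-x_2^2)}{\sqrt{x_1^2+(x_2+1)^2}\sqrt{x_1^2+(1-x_2)^2+\epsilon^2}}}$. Then $q_1$ is differentiable on $(0,\infty)$ with $q_1'(x_1) = \frac{P_1(x_1)}{4\, q_1(x_1)\, h_1(x_1)^3}$, where $h_1(x_1) = \sqrt{(x_1^2+(1+x_2)^2)(x_1^2+(1-x_2)^2+\epsilon^2)}$ and $P_1(x_1) = 4x_1(1-x_2^2+x_1^2) + \epsilon^2 x_1((x_2+1)(x_2+3)+x_1^2)$. In particular $q_1' > 0$ on $(0,\infty)$, so $q_1$ is strictly increasing there. -/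
/-!
Write `A = t² + a`, `B = t² + b`, `n = t² - c` and `h = √(AB)`, so that `q = √((1 + n/h)/2)`.
Since `h' = t(A + B)/h`, the quotient rule gives `(n/h)' = t(2AB - n(A + B))/h³`, and the
chain rule through the outer root contributes the factor `1/(4q)`. The numerator
`2AB - n(A + B)` is a quadratic in `t²` with positive coefficients, and `n² < AB` keeps `q`
away from the branch point of the outer root. For the offset curve `a = (1 + x₂)²`,
`b = (1 - x₂)² + ε²`, `c = 1 - x₂²`, and then `t(2AB - n(A + B))` is `P₁`.
-/

open Real Set

noncomputable section

namespace OffsetCurve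

def radius (a b t : ℝ) : ℝ := √((t ^ 2 + a) * (t ^ 2 + b))

def curve (a b c t : ℝ) : ℝ := 1 / √2 * √(1 + (t ^ 2 - c) / radius a b t)

def curveDeriv (a b c t : ℝ) : ℝ :=
  t * ((a + b + 2 * c) * t ^ 2 + 2 * a * b + c * (a + b)) / (4 * curve a b c t * radius a b t ^ 3)

variable {a b c t : ℝ}

lemma hasDerivAt_radius (ha : 0 < t ^ 2 + a) (hb : 0 < t ^ 2 + b) :
    HasDerivAt (radius a b) (t * (2 * t ^ 2 + a + b) / radius a b t) t := by
  have hAB : (t ^ 2 + a) * (t ^ 2 + b) ≠ 0 := (mul_pos ha hb).ne'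
  refine ((((hasDerivAt_pow 2 t).add_const a).fun_mul
    ((hasDerivAt_pow 2 t).add_const b)).sqrt hAB).congr_deriv ?_
  rw [radius]
  field_simp
  ring

lemma radius_pos (ha : 0 < t ^ 2 + a) (hb : 0 < t ^ 2 + b) : 0 < radius a b t :=
  sqrt_pos.mpr (mul_pos ha hb)

lemma hasDerivAt_div_radius (ha : 0 < t ^ 2 + a) (hb : 0 < t ^ 2 + b) :
    HasDerivAt (fun s ↦ (s ^ 2 - c) / radius a b s)
      (t * ((a + b + 2 * c) * t ^ 2 + 2 * a * b + c * (a + b)) / radius a b t ^ 3) t := by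
  have hh := radius_pos ha hb
  have hh2 : radius a b t ^ 2 = (t ^ 2 + a) * (t ^ 2 + b) := sq_sqrt (mul_pos ha hb).le
  refine (((hasDerivAt_pow 2 t).sub_const c).fun_div (hasDerivAt_radius ha hb)
    hh.ne').congr_deriv ?_
  field_simp
  linear_combination 2 * t * hh2

lemma curve_pos (hpos : 0 < 1 + (t ^ 2 - c) / radius a b t) : 0 < curve a b c t :=
  mul_pos (by positivity) (sqrt_pos.mpr hpos)

lemma hasDerivAt_curve (ha : 0 < t ^ 2 + a) (hb : 0 < t ^ 2 + b)
    (hpos : 0 < 1 + (t ^ 2 - c) / radius a b t) :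
    HasDerivAt (curve a b c) (curveDeriv a b c t) t := by
  have hh := radius_pos ha hb
  have hq := curve_pos hpos
  refine ((((hasDerivAt_div_radius ha hb).const_add 1).sqrt hpos.ne').const_mul
    (1 / √2)).congr_deriv ?_
  rw [curveDeriv, curve] at *
  field_simp
  rw [sq_sqrt zero_le_two]
  ring

lemma one_add_div_radius_pos (ha : 0 < a) (hb : 0 ≤ b) (hc : 0 ≤ c) (hcab : c ^ 2 ≤ a * b)
    (ht : t ≠ 0) : 0 < 1 + (t ^ 2 - c) / radius a b t := by
  have hA : 0 < t ^ 2 + a := by positivity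
  have hB : 0 < t ^ 2 + b := by positivity
  have hh := radius_pos hA hB
  have hh2 : radius a b t ^ 2 = (t ^ 2 + a) * (t ^ 2 + b) := sq_sqrt (mul_pos hA hB).le
  -- `AB - n² = (a + b + 2c)t² + ab - c²`
  have hsq : (t ^ 2 - c) ^ 2 < radius a b t ^ 2 := by
    have ht2 : 0 < t ^ 2 := by positivity
    rw [hh2]
    nlinarith [mul_pos ha ht2, mul_nonneg hb ht2.le, mul_nonneg hc ht2.le]
  have hlt := neg_lt_of_abs_lt (abs_lt_of_sq_lt_sq hsq hh.le)
  rw [← div_self hh.ne', ← add_div]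
  exact div_pos (by linarith) hh

lemma curveDeriv_pos (ha : 0 < a) (hb : 0 ≤ b) (hc : 0 ≤ c) (hcab : c ^ 2 ≤ a * b)
    (ht : 0 < t) : 0 < curveDeriv a b c t := by
  have hq := curve_pos (one_add_div_radius_pos ha hb hc hcab ht.ne')
  have hh := radius_pos (a := a) (b := b) (by positivity : 0 < t ^ 2 + a) (by positivity)
  unfold curveDeriv
  positivity

lemma hasDerivAt_curve_of_pos (ha : 0 < a) (hb : 0 ≤ b) (hc : 0 ≤ c) (hcab : c ^ 2 ≤ a * b)
    (ht : 0 < t) : HasDerivAt (curve a b c) (curveDeriv a b c t) t :=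
  hasDerivAt_curve (by positivity) (by positivity) (one_add_div_radius_pos ha hb hc hcab ht.ne')

lemma strictMonoOn_curve (ha : 0 < a) (hb : 0 ≤ b) (hc : 0 ≤ c) (hcab : c ^ 2 ≤ a * b) :
    StrictMonoOn (curve a b c) (Ioi 0) := by
  refine strictMonoOn_of_hasDerivWithinAt_pos (f' := curveDeriv a b c) (convex_Ioi 0)
    (fun t ht ↦ (hasDerivAt_curve_of_pos ha hb hc hcab ht).continuousAt.continuousWithinAt)
    (fun t ht ↦ ?_) (fun t ht ↦ ?_) <;> rw [interior_Ioi] at ht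
  · exact (hasDerivAt_curve_of_pos ha hb hc hcab ht).hasDerivWithinAt
  · exact curveDeriv_pos ha hb hc hcab ht

end OffsetCurve

end

open OffsetCurve in
theorem offset_q1_deriv_general (x2 eps : ℝ) (hx2 : x2 ∈ Set.Ioo (-1 : ℝ) 1)
    (q1 h1 P1 : ℝ → ℝ)
    (hq1 : ∀ x1 : ℝ, q1 x1 = (1 / Real.sqrt 2) *
      Real.sqrt (1 + (x1 ^ 2 - (1 - x2 ^ 2)) /
        (Real.sqrt (x1 ^ 2 + (x2 + 1) ^ 2) *
          Real.sqrt (x1 ^ 2 + (1 - x2) ^ 2 + eps ^ 2))))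
    (hh1 : ∀ x1 : ℝ, h1 x1 =
      Real.sqrt ((x1 ^ 2 + (1 + x2) ^ 2) * (x1 ^ 2 + (1 - x2) ^ 2 + eps ^ 2)))
    (hP1 : ∀ x1 : ℝ, P1 x1 = 4 * x1 * (1 - x2 ^ 2 + x1 ^ 2) +
      eps ^ 2 * x1 * ((x2 + 1) * (x2 + 3) + x1 ^ 2)) :
    (∀ x1 ∈ Set.Ioi (0 : ℝ),
      HasDerivAt q1 (P1 x1 / (4 * q1 x1 * h1 x1 ^ 3)) x1 ∧
        0 < P1 x1 / (4 * q1 x1 * h1 x1 ^ 3)) ∧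
    StrictMonoOn q1 (Set.Ioi (0 : ℝ)) := by
  obtain ⟨hl, hr⟩ := hx2
  have hq : q1 = curve ((x2 + 1) ^ 2) ((1 - x2) ^ 2 + eps ^ 2) (1 - x2 ^ 2) := by
    funext x
    rw [hq1, curve, radius, sqrt_mul (by positivity), ← add_assoc]
  have hh : h1 = radius ((x2 + 1) ^ 2) ((1 - x2) ^ 2 + eps ^ 2) := by
    funext x
    rw [hh1, radius]
    ring_nf
  have hP : ∀ x, P1 x / (4 * q1 x * h1 x ^ 3) =
      curveDeriv ((x2 + 1) ^ 2) ((1 - x2) ^ 2 + eps ^ 2) (1 - x2 ^ 2) x := by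
    intro x
    rw [hP1, hq, hh, curveDeriv]
    ring
  have ha : 0 < (x2 + 1) ^ 2 := by nlinarith
  have hb : 0 ≤ (1 - x2) ^ 2 + eps ^ 2 := by positivity
  have hc : 0 ≤ 1 - x2 ^ 2 := by nlinarith
  have hcab : (1 - x2 ^ 2) ^ 2 ≤ (x2 + 1) ^ 2 * ((1 - x2) ^ 2 + eps ^ 2) := by
    nlinarith [sq_nonneg ((x2 + 1) * eps)]
  simp only [hP]
  rw [hq]
  exact ⟨fun x hx ↦ ⟨hasDerivAt_curve_of_pos ha hb hc hcab hx,
    curveDeriv_pos ha hb hc hcab hx⟩, strictMonoOn_curve ha hb hc hcab⟩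

theorem offset_q1_deriv (x2 eps : ℝ) (hx2 : x2 ∈ Set.Ioo (-1 : ℝ) 1) (heps : 0 ≤ eps)
    (q1 h1 P1 : ℝ → ℝ)
    (hq1 : ∀ x1 : ℝ, q1 x1 = (1 / Real.sqrt 2) *
      Real.sqrt (1 + (x1 ^ 2 - (1 - x2 ^ 2)) /
        (Real.sqrt (x1 ^ 2 + (x2 + 1) ^ 2) *
          Real.sqrt (x1 ^ 2 + (1 - x2) ^ 2 + eps ^ 2))))
    (hh1 : ∀ x1 : ℝ, h1 x1 =
      Real.sqrt ((x1 ^ 2 + (1 + x2) ^ 2) * (x1 ^ 2 + (1 - x2) ^ 2 + eps ^ 2)))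
    (hP1 : ∀ x1 : ℝ, P1 x1 = 4 * x1 * (1 - x2 ^ 2 + x1 ^ 2) +
      eps ^ 2 * x1 * ((x2 + 1) * (x2 + 3) + x1 ^ 2)) :
    (∀ x1 ∈ Set.Ioi (0 : ℝ),
      HasDerivAt q1 (P1 x1 / (4 * q1 x1 * h1 x1 ^ 3)) x1 ∧
        0 < P1 x1 / (4 * q1 x1 * h1 x1 ^ 3)) ∧
    StrictMonoOn q1 (Set.Ioi (0 : ℝ)) :=
  offset_q1_deriv_general x2 eps hx2 q1 h1 P1 hq1 hh1 hP1
end
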